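/- Let ω^{CNQJX} = ∑_x p_x ∑_c p_{c|x} |c⟩⟨c|^C ⊗ ω_c^N ⊗ ρ_{cx}^Q ⊗ |j_x⟩⟨j_x|^J ⊗ |x⟩⟨x|^X with purification |ω⟩^{CNQJXX'R_CR_NR_Q}, and let 𝒩: CNQJ → CNQ be a channel minimizing (1/2)I(CNQ : R_CR_NR_QXX')_{𝒩(|ω⟩⟨ω|)} subject to 1 − F(ω^{CNQX}, 𝒩(ω^{CNQJX})) ≤ D. Let 𝒫^C be the completely dephasing channel on C in the basis {|c⟩}. Then 𝒩∘𝒫^C also satisfies the distortion constraint and achieves the same minimum. -/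

import Mathlib

open scoped BigOperators ComplexOrder
open Matrix

noncomputable section
attribute [local instance] Classical.propDecidable

/-- `-x log₂ x`, extended by `0` for non-positive `x`. -/
def negxlog2 (x : ℝ) : ℝ := if x ≤ 0 then 0 else -(x * Real.logb 2 x)

/-- Von Neumann entropy (base 2) of a matrix, via eigenvalues of a Hermitian matrix
(junk value `0` on non-Hermitian matrices). -/
def entropy {n : Type} [Fintype n] [DecidableEq n] (M : Matrix n n ℂ) : ℝ :=
  if h : M.IsHermitian then ∑ i, negxlog2 (h.eigenvalues i) else 0

/-- Partial trace over the right (second) factor. -/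
def ptraceRight {A R : Type} [Fintype A] [Fintype R]
    (M : Matrix (A × R) (A × R) ℂ) : Matrix A A ℂ :=
  Matrix.of fun a a' => ∑ r, M (a, r) (a', r)

/-- Partial trace over the left (first) factor. -/
def ptraceLeft {A R : Type} [Fintype A] [Fintype R]
    (M : Matrix (A × R) (A × R) ℂ) : Matrix R R ℂ :=
  Matrix.of fun r r' => ∑ a, M (a, r) (a, r')

/-- Quantum mutual information `I(A:R) = S(A) + S(R) - S(AR)` of a bipartite matrix. -/
def mutualInfo {A R : Type} [Fintype A] [DecidableEq A] [Fintype R] [DecidableEq R]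
    (M : Matrix (A × R) (A × R) ℂ) : ℝ :=
  entropy (ptraceRight M) + entropy (ptraceLeft M) - entropy M

/-- The extension `Φ ⊗ id_n` of a linear map on matrices, applied entrywise. -/
def matExt {A B n : Type} [Fintype A] [Fintype B] [Fintype n]
    (Φ : Matrix A A ℂ →ₗ[ℂ] Matrix B B ℂ) (M : Matrix (A × n) (A × n) ℂ) :
    Matrix (B × n) (B × n) ℂ :=
  Matrix.of fun p q => Φ (Matrix.of fun a a' => M (a, p.2) (a', q.2)) p.1 q.1

/-- A linear map on matrices is a quantum channel if it is completely positive
(all extensions preserve positive semidefiniteness) and trace preserving. -/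
def IsQChannel {A B : Type} [Fintype A] [Fintype B]
    (Φ : Matrix A A ℂ →ₗ[ℂ] Matrix B B ℂ) : Prop :=
  (∀ (n : Type) [Fintype n], ∀ M : Matrix (A × n) (A × n) ℂ,
      M.PosSemidef → (matExt Φ M).PosSemidef) ∧
  ∀ M : Matrix A A ℂ, (Φ M).trace = M.trace

/-- Density matrix predicate. -/
def IsDensity {n : Type} [Fintype n] (M : Matrix n n ℂ) : Prop :=
  M.PosSemidef ∧ M.trace = 1

/-- The rank-one matrix `|v⟩⟨v|`. -/
def pureMat {d : Type} (v : d → ℂ) : Matrix d d ℂ :=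
  Matrix.of fun i j => v i * (starRingEnd ℂ) (v j)

/-- `ψ` (a vector on `A ⊗ A' ⊗ R`) purifies the bipartite state `ρ` on `A ⊗ R`. -/
def Purifies {A A' R : Type} [Fintype A'] (ψ : A × A' × R → ℂ)
    (ρ : Matrix (A × R) (A × R) ℂ) : Prop :=
  ∀ a r a' r', ρ (a, r) (a', r') = ∑ x, ψ (a, x, r) * (starRingEnd ℂ) (ψ (a', x, r'))

/-- The state on `A ⊗ A''` obtained from the purification `ψ` by applying `Φ` to the
purifying system `A'` and tracing out `R`. -/
def epOut {A A' A'' R : Type} [Fintype A] [Fintype A'] [Fintype A''] [Fintype R]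
    (ψ : A × A' × R → ℂ) (Φ : Matrix A' A' ℂ →ₗ[ℂ] Matrix A'' A'' ℂ) :
    Matrix (A × A'') (A × A'') ℂ :=
  Matrix.of fun p q => ∑ r, Φ (Matrix.of fun x x' =>
      ψ (p.1, x, r) * (starRingEnd ℂ) (ψ (q.1, x', r))) p.2 q.2

/-- Witness predicate for the entanglement of purification. -/
def EpWitness {A R : Type} [Fintype A] [DecidableEq A] [Fintype R]
    (ρ : Matrix (A × R) (A × R) ℂ) (e : ℝ)
    (A' A'' : Type) [Fintype A'] [Fintype A''] [DecidableEq A''] : Prop :=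
  ∃ (ψ : A × A' × R → ℂ) (Φ : Matrix A' A' ℂ →ₗ[ℂ] Matrix A'' A'' ℂ),
    Purifies ψ ρ ∧ IsQChannel Φ ∧ e = entropy (epOut ψ Φ)

/-- Entanglement of purification `E_p(A:R)` of a bipartite matrix: the infimum of
`S(A A'')` over purifications and channels applied to the purifying system. -/
def Ep {A R : Type} [Fintype A] [DecidableEq A] [Fintype R]
    (ρ : Matrix (A × R) (A × R) ℂ) : ℝ :=
  sInf { e : ℝ | ∃ (A' A'' : Type) (i1 : Fintype A') (i2 : Fintype A'')
      (i3 : DecidableEq A''), @EpWitness A R _ _ _ ρ e A' A'' i1 i2 i3 }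

/-- The square root of a positive semidefinite matrix, as `Matrix.PosSemidef.sqrt` was
defined in the older Mathlib (removed since). -/
def psdSqrt {n : Type} [Fintype n] [DecidableEq n] {A : Matrix n n ℂ} (hA : A.PosSemidef) :
    Matrix n n ℂ :=
  hA.1.eigenvectorUnitary.1 * diagonal ((↑) ∘ (√·) ∘ hA.1.eigenvalues) *
    (star hA.1.eigenvectorUnitary : Matrix n n ℂ)

/-- Fidelity `F(ρ,σ) = (tr √(√ρ σ √ρ))²` (junk value `0` off positive semidefinite pairs). -/
def fidelity {n : Type} [Fintype n] [DecidableEq n] (ρ σ : Matrix n n ℂ) : ℝ :=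
  if h : ρ.PosSemidef ∧ σ.PosSemidef then
    if h2 : (psdSqrt h.1 * σ * psdSqrt h.1).PosSemidef then ((psdSqrt h2).trace.re) ^ 2 else 0
  else 0

/-- The completely dephasing (pinching) channel on the classical register `C`
of a composite system `C ⊗ W`. -/
def pinch (C W : Type) [Fintype C] [DecidableEq C] [Fintype W] :
    Matrix (C × W) (C × W) ℂ →ₗ[ℂ] Matrix (C × W) (C × W) ℂ where
  toFun M := Matrix.of fun u v => if u.1 = v.1 then M u v else 0
  map_add' M N := by
    ext u v
    by_cases h : u.1 = v.1 <;> simp [h]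
  map_smul' c M := by
    ext u v
    by_cases h : u.1 = v.1 <;> simp [h]

variable {C N Q J X RN RQ : Type}

/-- Purification of the Koashi–Imoto structured source
`ω = ∑ₓ pₓ ∑_c p_{c|x} |c⟩⟨c| ⊗ ω_c^N ⊗ ρ_{cx}^Q ⊗ |jₓ⟩⟨jₓ| ⊗ |x⟩⟨x|`;
the first component is the input `C ⊗ N ⊗ Q ⊗ J`, the second the references
`R_C ⊗ R_N ⊗ R_Q ⊗ X ⊗ X'` (with `R_C = C`, `X' = X`). -/
def kiOmegaVec (p : X → ℝ) (pc : X → C → ℝ) (wc : C → N × RN → ℂ)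
    (rq : C → X → Q × RQ → ℂ) (jv : X → J → ℂ) :
    (C × (N × (Q × J))) × (C × (RN × (RQ × (X × X)))) → ℂ :=
  fun u =>
    if u.2.1 = u.1.1 ∧ u.2.2.2.2.2 = u.2.2.2.2.1 then
      ((Real.sqrt (p u.2.2.2.2.1) * Real.sqrt (pc u.2.2.2.2.1 u.1.1) : ℝ) : ℂ) *
        wc u.1.1 (u.1.2.1, u.2.2.1) * rq u.1.1 u.2.2.2.2.1 (u.1.2.2.1, u.2.2.2.1) *
        jv u.2.2.2.2.1 u.1.2.2.2
    else 0

/-- `ω_c^N = tr_{R_N} |ω_c⟩⟨ω_c|`. -/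
def kiN [Fintype RN] (wc : C → N × RN → ℂ) (c : C) : Matrix N N ℂ :=
  Matrix.of fun n n' => ∑ r, wc c (n, r) * (starRingEnd ℂ) (wc c (n', r))

/-- `ρ_{cx}^Q = tr_{R_Q} |ρ_{cx}⟩⟨ρ_{cx}|`. -/
def kiQ [Fintype RQ] (rq : C → X → Q × RQ → ℂ) (c : C) (x : X) : Matrix Q Q ℂ :=
  Matrix.of fun q q' => ∑ r, rq c x (q, r) * (starRingEnd ℂ) (rq c x (q', r))

/-- The cq source `ω^{CNQJX}` (with the reference `X` kept). -/
def kiSourceJ [Fintype RN] [Fintype RQ] (p : X → ℝ) (pc : X → C → ℝ)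
    (wc : C → N × RN → ℂ) (rq : C → X → Q × RQ → ℂ) (jv : X → J → ℂ) :
    Matrix ((C × (N × (Q × J))) × X) ((C × (N × (Q × J))) × X) ℂ :=
  Matrix.of fun u v =>
    if v.1.1 = u.1.1 ∧ v.2 = u.2 then
      ((p u.2 * pc u.2 u.1.1 : ℝ) : ℂ) * kiN wc u.1.1 u.1.2.1 v.1.2.1 *
        kiQ rq u.1.1 u.2 u.1.2.2.1 v.1.2.2.1 *
        (jv u.2 u.1.2.2.2 * (starRingEnd ℂ) (jv u.2 v.1.2.2.2))
    else 0

/-- The ideal output state `ω^{CNQX}`. -/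
def kiIdeal [Fintype RN] [Fintype RQ] (p : X → ℝ) (pc : X → C → ℝ)
    (wc : C → N × RN → ℂ) (rq : C → X → Q × RQ → ℂ) :
    Matrix ((C × (N × Q)) × X) ((C × (N × Q)) × X) ℂ :=
  Matrix.of fun u v =>
    if v.1.1 = u.1.1 ∧ v.2 = u.2 then
      ((p u.2 * pc u.2 u.1.1 : ℝ) : ℂ) * kiN wc u.1.1 u.1.2.1 v.1.2.1 *
        kiQ rq u.1.1 u.2 u.1.2.2 v.1.2.2
    else 0


def cpin {d γ : Type} (f : d → γ) (M : Matrix d d ℂ) : Matrix d d ℂ :=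
  Matrix.of fun i j => if f i = f j then M i j else 0

lemma cpin_apply {d γ : Type} (f : d → γ) (M : Matrix d d ℂ) (i j : d) :
    cpin f M i j = if f i = f j then M i j else 0 := rfl

lemma cpin_posSemidef {d γ : Type} [Fintype d] [DecidableEq d] [Fintype γ]
    (f : d → γ) {M : Matrix d d ℂ} (hM : M.PosSemidef) : (cpin f M).PosSemidef := by
  classical
  have hrepr : cpin f M = ∑ c : γ,
      (Matrix.diagonal (fun i => if f i = c then (1:ℂ) else 0)) * M *
      (Matrix.diagonal (fun i => if f i = c then (1:ℂ) else 0))ᴴ := by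
    ext i j
    have hc : ∀ c : γ, ((Matrix.diagonal (fun i => if f i = c then (1:ℂ) else 0)) * M *
        (Matrix.diagonal (fun i => if f i = c then (1:ℂ) else 0))ᴴ) i j
        = (if f i = c then (1:ℂ) else 0) * M i j * (if f j = c then (1:ℂ) else 0) := by
      intro c
      rw [Matrix.diagonal_conjTranspose]
      rw [Matrix.mul_diagonal, Matrix.diagonal_mul]
      simp [Pi.star_apply, apply_ite (star : ℂ → ℂ)]
    rw [Matrix.sum_apply]
    simp_rw [hc]
    by_cases h : f i = f j
    · rw [cpin_apply, if_pos h]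
      rw [Finset.sum_eq_single (f i)]
      · simp [h]
      · intro c _ hcne
        simp [Ne.symm hcne]
      · simp
    · rw [cpin_apply, if_neg h]
      symm
      apply Finset.sum_eq_zero
      intro c _
      by_cases h1 : f i = c <;> by_cases h2 : f j = c <;> simp [h1, h2]
      exact absurd (h1.trans h2.symm) h
  rw [hrepr]
  exact Finset.sum_induction _ _ (fun a b ha hb => ha.add hb) Matrix.PosSemidef.zero
    (fun c _ => hM.mul_mul_conjTranspose_same _)

lemma negxlog2_eq {x : ℝ} (hx : 0 ≤ x) :
    negxlog2 x = (Real.log 2)⁻¹ * Real.negMulLog x := by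
  by_cases h : x ≤ 0
  · have : x = 0 := le_antisymm h hx
    simp [negxlog2, this, Real.negMulLog]
  · simp only [negxlog2, if_neg h, Real.negMulLog, Real.logb]
    ring

lemma concaveOn_negxlog2 : ConcaveOn ℝ (Set.Ici (0:ℝ)) negxlog2 := by
  refine ⟨convex_Ici 0, ?_⟩
  intro x hx y hy a b ha hb hab
  have hmem : a • x + b • y ∈ Set.Ici (0:ℝ) := (convex_Ici 0) hx hy ha hb hab
  rw [negxlog2_eq hx, negxlog2_eq hy, negxlog2_eq hmem]
  have h := Real.concaveOn_negMulLog.2 hx hy ha hb hab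
  have h2 : (0:ℝ) ≤ (Real.log 2)⁻¹ := by positivity
  simp only [smul_eq_mul] at h ⊢
  nlinarith [h]

/-- indicator sum identity -/
lemma ind_sum {γ : Type} [Fintype γ] (a b : γ) :
    ∑ c : γ, (if a = c then (1:ℂ) else 0) * (if b = c then (1:ℂ) else 0)
      = if a = b then (1:ℂ) else 0 := by
  by_cases h : a = b
  · rw [if_pos h, Finset.sum_eq_single a]
    · simp [h]
    · intro c _ hc
      simp [Ne.symm hc]
    · simp
  · rw [if_neg h]
    apply Finset.sum_eq_zero
    intro c _
    by_cases h1 : a = c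
    · have h2 : ¬ b = c := fun e => h (h1.trans e.symm)
      simp [h2]
    · simp [h1]

lemma master {d γ : Type} [Fintype d] [Fintype γ] (f : d → γ) (φ χ : d → ℂ) :
    ∑ c : γ, (∑ k, (if f k = c then (1:ℂ) else 0) * φ k) *
        star (∑ l, (if f l = c then (1:ℂ) else 0) * χ l)
      = ∑ k, ∑ l, (if f k = f l then (1:ℂ) else 0) * (φ k * star (χ l)) := by
  calc ∑ c : γ, (∑ k, (if f k = c then (1:ℂ) else 0) * φ k) *
        star (∑ l, (if f l = c then (1:ℂ) else 0) * χ l)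
      = ∑ c : γ, ∑ k, ∑ l, ((if f k = c then (1:ℂ) else 0) * (if f l = c then (1:ℂ) else 0))
          * (φ k * star (χ l)) := by
        refine Finset.sum_congr rfl fun c _ => ?_
        rw [star_sum, Finset.sum_mul_sum]
        refine Finset.sum_congr rfl fun k _ => Finset.sum_congr rfl fun l _ => ?_
        rw [star_mul']
        rw [apply_ite (star : ℂ → ℂ), star_one, star_zero]
        ring
    _ = ∑ k, ∑ l, (∑ c : γ, (if f k = c then (1:ℂ) else 0) * (if f l = c then (1:ℂ) else 0))
          * (φ k * star (χ l)) := by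
        rw [Finset.sum_comm]
        refine Finset.sum_congr rfl fun k _ => ?_
        rw [Finset.sum_comm]
        refine Finset.sum_congr rfl fun l _ => ?_
        rw [Finset.sum_mul]
    _ = ∑ k, ∑ l, (if f k = f l then (1:ℂ) else 0) * (φ k * star (χ l)) := by
        refine Finset.sum_congr rfl fun k _ => Finset.sum_congr rfl fun l _ => ?_
        rw [ind_sum]

lemma entropy_le_cpin {d γ : Type} [Fintype d] [DecidableEq d] [Fintype γ]
    (f : d → γ) {M : Matrix d d ℂ} (hM : M.PosSemidef) (hM' : (cpin f M).PosSemidef) :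
    entropy M ≤ entropy (cpin f M) := by
  classical
  set x : d → ℝ := hM.1.eigenvalues with hxdef
  set y : d → ℝ := hM'.1.eigenvalues with hydef
  set U : Matrix d d ℂ := (Matrix.IsHermitian.eigenvectorUnitary hM'.1 : Matrix d d ℂ) with hUdef
  set V : Matrix d d ℂ := (Matrix.IsHermitian.eigenvectorUnitary hM.1 : Matrix d d ℂ) with hVdef
  have hUU : star U * U = 1 :=
    Matrix.mem_unitaryGroup_iff'.mp (Matrix.IsHermitian.eigenvectorUnitary hM'.1).2
  have hUU' : U * star U = 1 :=
    Matrix.mem_unitaryGroup_iff.mp (Matrix.IsHermitian.eigenvectorUnitary hM'.1).2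
  have hVV : star V * V = 1 :=
    Matrix.mem_unitaryGroup_iff'.mp (Matrix.IsHermitian.eigenvectorUnitary hM.1).2
  have hVV' : V * star V = 1 :=
    Matrix.mem_unitaryGroup_iff.mp (Matrix.IsHermitian.eigenvectorUnitary hM.1).2
  have hco : ∀ r : ℝ, (RCLike.ofReal r : ℂ) = (r : ℂ) := fun _ => rfl
  -- entries of M by spectral theorem
  have hMkl : ∀ k l, M k l = ∑ m, V k m * ((x m : ℝ) : ℂ) * star (V l m) := by
    intro k l
    conv_lhs => rw [hM.1.spectral_theorem, Unitary.conjStarAlgAut_apply]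
    rw [Matrix.mul_apply]
    refine Finset.sum_congr rfl fun m _ => ?_
    rw [Matrix.mul_diagonal, Matrix.star_apply]
    rfl
  set B : d → d → ℝ := fun i j => ∑ c : γ,
      Complex.normSq (∑ k, (if f k = c then (1:ℂ) else 0) * (star (U k i) * V k j)) with hBdef
  have hBnn : ∀ i j, 0 ≤ B i j := by
    intro i j
    exact Finset.sum_nonneg fun c _ => Complex.normSq_nonneg _
  have hB' : ∀ i j, ((B i j : ℝ) : ℂ) = ∑ k, ∑ l, (if f k = f l then (1:ℂ) else 0) *
      ((star (U k i) * V k j) * star (star (U l i) * V l j)) := by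
    intro i j
    rw [hBdef]
    push_cast
    rw [← master f (fun k => star (U k i) * V k j) (fun l => star (U l i) * V l j)]
    refine Finset.sum_congr rfl fun c _ => ?_
    rw [← Complex.mul_conj]
    rfl
  -- key: y i = sum_j B i j * x j  (complex version)
  have hkeyC : ∀ i, ((y i : ℝ) : ℂ) = ∑ j, ((B i j : ℝ) : ℂ) * ((x j : ℝ) : ℂ) := by
    intro i
    have hd := hM'.1.conjStarAlgAut_star_eigenvectorUnitary
    rw [Unitary.conjStarAlgAut_star_apply] at hd
    have h1 : ((y i : ℝ) : ℂ) = (star U * cpin f M * U) i i := by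
      rw [hd]
      rw [Matrix.diagonal_apply_eq]
      rfl
    have h2 : (star U * cpin f M * U) i i
        = ∑ l, ∑ k, star (U k i) * cpin f M k l * U l i := by
      rw [Matrix.mul_apply]
      refine Finset.sum_congr rfl fun l _ => ?_
      rw [Matrix.mul_apply, Finset.sum_mul]
      refine Finset.sum_congr rfl fun k _ => ?_
      rw [Matrix.star_apply]
    have h3 : ∑ l, ∑ k, star (U k i) * cpin f M k l * U l i
        = ∑ k, ∑ l, (if f k = f l then (1:ℂ) else 0) * (star (U k i) * U l i * M k l) := by
      rw [Finset.sum_comm]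
      refine Finset.sum_congr rfl fun k _ => Finset.sum_congr rfl fun l _ => ?_
      rw [cpin_apply]
      by_cases h : f k = f l
      · rw [if_pos h, if_pos h]; ring
      · rw [if_neg h, if_neg h]; ring
    have h4 : ∑ j, ((B i j : ℝ) : ℂ) * ((x j : ℝ) : ℂ)
        = ∑ k, ∑ l, (if f k = f l then (1:ℂ) else 0) * (star (U k i) * U l i * M k l) := by
      calc ∑ j, ((B i j : ℝ) : ℂ) * ((x j : ℝ) : ℂ)
          = ∑ j, ∑ k, ∑ l, (if f k = f l then (1:ℂ) else 0) *
              (star (U k i) * U l i * (V k j * ((x j : ℝ):ℂ) * star (V l j))) := by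
            refine Finset.sum_congr rfl fun j _ => ?_
            rw [hB' i j, Finset.sum_mul]
            refine Finset.sum_congr rfl fun k _ => ?_
            rw [Finset.sum_mul]
            refine Finset.sum_congr rfl fun l _ => ?_
            rw [star_mul', star_star]
            ring
        _ = ∑ k, ∑ l, (if f k = f l then (1:ℂ) else 0) *
              (star (U k i) * U l i * (∑ j, V k j * ((x j : ℝ):ℂ) * star (V l j))) := by
            rw [Finset.sum_comm]
            refine Finset.sum_congr rfl fun k _ => ?_
            rw [Finset.sum_comm]
            refine Finset.sum_congr rfl fun l _ => ?_
            rw [Finset.mul_sum, Finset.mul_sum]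
        _ = _ := by
            refine Finset.sum_congr rfl fun k _ => Finset.sum_congr rfl fun l _ => ?_
            rw [← hMkl]
    rw [h1, h2, h3, h4]
  -- row and column sums of B
  have hUmul : ∀ i, ∑ k, star (U k i) * U k i = 1 := by
    intro i
    have h : (star U * U) i i = ∑ k, star (U k i) * U k i := by
      rw [Matrix.mul_apply]
      refine Finset.sum_congr rfl fun k _ => ?_
      rw [Matrix.star_apply]
    rw [← h, hUU, Matrix.one_apply_eq]
  have hVmul : ∀ j, ∑ k, V k j * star (V k j) = 1 := by
    intro j
    have h : (star V * V) j j = ∑ k, star (V k j) * V k j := by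
      rw [Matrix.mul_apply]
      refine Finset.sum_congr rfl fun k _ => ?_
      rw [Matrix.star_apply]
    have h2 : ∑ k, V k j * star (V k j) = ∑ k, star (V k j) * V k j := by
      refine Finset.sum_congr rfl fun k _ => mul_comm _ _
    rw [h2, ← h, hVV, Matrix.one_apply_eq]
  have hVj : ∀ k l, ∑ j, V k j * star (V l j) = if k = l then (1:ℂ) else 0 := by
    intro k l
    have h : (V * star V) k l = ∑ j, V k j * star (V l j) := by
      rw [Matrix.mul_apply]
      refine Finset.sum_congr rfl fun j _ => ?_
      rw [Matrix.star_apply]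
    rw [← h, hVV', Matrix.one_apply]
  have hUi : ∀ k l, ∑ i, star (U k i) * U l i = if l = k then (1:ℂ) else 0 := by
    intro k l
    have h : (U * star U) l k = ∑ i, U l i * star (U k i) := by
      rw [Matrix.mul_apply]
      refine Finset.sum_congr rfl fun i _ => ?_
      rw [Matrix.star_apply]
    have h2 : ∑ i, star (U k i) * U l i = ∑ i, U l i * star (U k i) := by
      refine Finset.sum_congr rfl fun i _ => mul_comm _ _
    rw [h2, ← h, hUU', Matrix.one_apply]
  have hrowC : ∀ i, ∑ j, ((B i j : ℝ) : ℂ) = 1 := by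
    intro i
    calc ∑ j, ((B i j : ℝ) : ℂ)
        = ∑ j, ∑ k, ∑ l, (if f k = f l then (1:ℂ) else 0) *
            ((star (U k i) * U l i) * (V k j * star (V l j))) := by
          refine Finset.sum_congr rfl fun j _ => ?_
          rw [hB' i j]
          refine Finset.sum_congr rfl fun k _ => Finset.sum_congr rfl fun l _ => ?_
          rw [star_mul', star_star]
          ring
      _ = ∑ k, ∑ l, (if f k = f l then (1:ℂ) else 0) *
            ((star (U k i) * U l i) * (∑ j, V k j * star (V l j))) := by
          rw [Finset.sum_comm]
          refine Finset.sum_congr rfl fun k _ => ?_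
          rw [Finset.sum_comm]
          refine Finset.sum_congr rfl fun l _ => ?_
          rw [Finset.mul_sum, Finset.mul_sum]
      _ = ∑ k, star (U k i) * U k i := by
          refine Finset.sum_congr rfl fun k _ => ?_
          rw [Finset.sum_eq_single k]
          · rw [hVj, if_pos rfl, if_pos rfl]; ring
          · intro l _ hl
            rw [hVj, if_neg (show ¬ k = l from fun e => hl e.symm)]; ring
          · intro hk; exact absurd (Finset.mem_univ k) hk
      _ = 1 := hUmul i
  have hcolC : ∀ j, ∑ i, ((B i j : ℝ) : ℂ) = 1 := by
    intro j
    calc ∑ i, ((B i j : ℝ) : ℂ)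
        = ∑ i, ∑ k, ∑ l, (if f k = f l then (1:ℂ) else 0) *
            ((V k j * star (V l j)) * (star (U k i) * U l i)) := by
          refine Finset.sum_congr rfl fun i _ => ?_
          rw [hB' i j]
          refine Finset.sum_congr rfl fun k _ => Finset.sum_congr rfl fun l _ => ?_
          rw [star_mul', star_star]
          ring
      _ = ∑ k, ∑ l, (if f k = f l then (1:ℂ) else 0) *
            ((V k j * star (V l j)) * (∑ i, star (U k i) * U l i)) := by
          rw [Finset.sum_comm]
          refine Finset.sum_congr rfl fun k _ => ?_
          rw [Finset.sum_comm]
          refine Finset.sum_congr rfl fun l _ => ?_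
          rw [Finset.mul_sum, Finset.mul_sum]
      _ = ∑ k, V k j * star (V k j) := by
          refine Finset.sum_congr rfl fun k _ => ?_
          rw [Finset.sum_eq_single k]
          · rw [hUi, if_pos rfl, if_pos rfl]; ring
          · intro l _ hl
            rw [hUi, if_neg (show ¬ l = k from hl)]; ring
          · intro hk; exact absurd (Finset.mem_univ k) hk
      _ = 1 := hVmul j
  have hrow : ∀ i, ∑ j, B i j = 1 := fun i => by exact_mod_cast hrowC i
  have hcol : ∀ j, ∑ i, B i j = 1 := fun j => by exact_mod_cast hcolC j
  have hyx : ∀ i, y i = ∑ j, B i j * x j := by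
    intro i
    have h2 : ((y i : ℝ):ℂ) = ((∑ j, B i j * x j : ℝ) : ℂ) := by
      rw [hkeyC i]
      push_cast
      rfl
    exact_mod_cast h2
  have hxnn : ∀ j, 0 ≤ x j := fun j => hM.eigenvalues_nonneg j
  have jensen : ∀ i, ∑ j, B i j * negxlog2 (x j) ≤ negxlog2 (y i) := by
    intro i
    rw [hyx i]
    have h := concaveOn_negxlog2.le_map_sum (t := Finset.univ) (w := B i) (p := x)
      (fun j _ => hBnn i j) (by simpa using hrow i) (fun j _ => hxnn j)
    simpa [smul_eq_mul] using h
  calc entropy M = ∑ j, negxlog2 (x j) := by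
        unfold entropy
        rw [dif_pos hM.1]
    _ = ∑ j, (∑ i, B i j) * negxlog2 (x j) := by
        refine Finset.sum_congr rfl fun j _ => ?_
        rw [hcol j, one_mul]
    _ = ∑ i, ∑ j, B i j * negxlog2 (x j) := by
        rw [Finset.sum_comm]
        refine Finset.sum_congr rfl fun j _ => ?_
        rw [Finset.sum_mul]
    _ ≤ ∑ i, negxlog2 (y i) := Finset.sum_le_sum fun i _ => jensen i
    _ = entropy (cpin f M) := by
        unfold entropy
        rw [dif_pos hM'.1]

section Glue

lemma pureMat_posSemidef {d : Type} [Fintype d] (v : d → ℂ) : (pureMat v).PosSemidef := by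
  rw [Matrix.posSemidef_iff_dotProduct_mulVec]
  constructor
  · ext i j
    simp [pureMat, Matrix.conjTranspose_apply, mul_comm]
  · intro z
    have h : star z ⬝ᵥ (pureMat v *ᵥ z) =
        star (∑ j, star (v j) * z j) * (∑ j, star (v j) * z j) := by
      simp only [dotProduct, Matrix.mulVec, dotProduct, pureMat, Matrix.of_apply,
        Pi.star_apply, starRingEnd_apply, star_sum, star_mul', Finset.mul_sum, Finset.sum_mul]
      rw [Finset.sum_comm]
      refine Finset.sum_congr rfl fun i _ => Finset.sum_congr rfl fun j _ => ?_
      rw [star_star]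
      ring
    rw [h]
    exact star_mul_self_nonneg _

lemma matExt_comp {A B B2 n : Type} [Fintype A] [Fintype B] [Fintype B2] [Fintype n]
    (Φ : Matrix B B ℂ →ₗ[ℂ] Matrix B2 B2 ℂ) (Ψ : Matrix A A ℂ →ₗ[ℂ] Matrix B B ℂ)
    (M : Matrix (A × n) (A × n) ℂ) :
    matExt (Φ ∘ₗ Ψ) M = matExt Φ (matExt Ψ M) := rfl

lemma matExt_pinch_eq_cpin {C W n : Type} [Fintype C] [DecidableEq C] [Fintype W] [Fintype n]
    (M : Matrix ((C × W) × n) ((C × W) × n) ℂ) :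
    matExt (pinch C W) M = cpin (fun p : (C × W) × n => p.1.1) M := by
  ext p q
  show (if p.1.1 = q.1.1 then M (p.1, p.2) (q.1, q.2) else 0) = _
  rw [cpin_apply]
  by_cases h : p.1.1 = q.1.1 <;> simp [h]

lemma pinch_trace {C W : Type} [Fintype C] [DecidableEq C] [Fintype W]
    (M : Matrix (C × W) (C × W) ℂ) : (pinch C W M).trace = M.trace := by
  unfold Matrix.trace
  refine Finset.sum_congr rfl fun u _ => ?_
  show (if u.1 = u.1 then M u u else 0) = M u u
  rw [if_pos rfl]

lemma matExt_cpin_ref {A B n γ : Type} [Fintype A] [Fintype B] [Fintype n]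
    (Φ : Matrix A A ℂ →ₗ[ℂ] Matrix B B ℂ) (g : n → γ) (M : Matrix (A × n) (A × n) ℂ) :
    matExt Φ (cpin (fun p : A × n => g p.2) M) = cpin (fun p : B × n => g p.2) (matExt Φ M) := by
  ext p q
  show Φ (Matrix.of fun a a' => if g p.2 = g q.2 then M (a, p.2) (a', q.2) else 0) p.1 q.1
      = if g p.2 = g q.2 then Φ (Matrix.of fun a a' => M (a, p.2) (a', q.2)) p.1 q.1 else 0
  by_cases h : g p.2 = g q.2
  · simp only [if_pos h]
  · simp only [if_neg h]
    have h0 : (Matrix.of fun (a a' : A) => (0:ℂ)) = (0 : Matrix A A ℂ) := rfl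
    rw [h0, map_zero]
    rfl

lemma ptraceLeft_matExt {A B n : Type} [Fintype A] [Fintype B] [Fintype n]
    (Φ : Matrix A A ℂ →ₗ[ℂ] Matrix B B ℂ) (hTP : ∀ M : Matrix A A ℂ, (Φ M).trace = M.trace)
    (M : Matrix (A × n) (A × n) ℂ) :
    ptraceLeft (matExt Φ M) = ptraceLeft M := by
  ext r r'
  show ∑ b, Φ (Matrix.of fun a a' => M (a, r) (a', r')) b b = ∑ a, M (a, r) (a, r')
  have h := hTP (Matrix.of fun a a' => M (a, r) (a', r'))
  unfold Matrix.trace at h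
  exact h

end Glue

/-- if `𝒩` is an optimal channel for the entanglement-assisted
rate-distortion problem with the Koashi–Imoto structured source, then `𝒩 ∘ 𝒫^C`
(with `𝒫^C` the dephasing channel on `C`) is also feasible and optimal. -/
theorem ki_dephasing_optimal
    [Fintype C] [DecidableEq C] [Fintype N] [DecidableEq N] [Fintype Q] [DecidableEq Q]
    [Fintype J] [DecidableEq J] [Fintype X] [DecidableEq X]
    [Fintype RN] [DecidableEq RN] [Fintype RQ] [DecidableEq RQ]
    (p : X → ℝ) (pc : X → C → ℝ) (wc : C → N × RN → ℂ) (rq : C → X → Q × RQ → ℂ)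
    (jv : X → J → ℂ)
    (hp : ∀ x, 0 ≤ p x) (hp1 : ∑ x, p x = 1)
    (hpc : ∀ x c, 0 ≤ pc x c) (hpc1 : ∀ x, ∑ c, pc x c = 1)
    (hwc : ∀ c, ∑ z, ‖wc c z‖ ^ 2 = 1) (hrq : ∀ c x, ∑ z, ‖rq c x z‖ ^ 2 = 1)
    (hjv : ∀ x, ∑ j, ‖jv x j‖ ^ 2 = 1)
    (D : ℝ)
    (Nm : Matrix (C × (N × (Q × J))) (C × (N × (Q × J))) ℂ →ₗ[ℂ]
          Matrix (C × (N × Q)) (C × (N × Q)) ℂ)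
    (hN : IsQChannel Nm)
    (hfeas : 1 - fidelity (kiIdeal p pc wc rq) (matExt Nm (kiSourceJ p pc wc rq jv)) ≤ D)
    (hopt : ∀ Mm : Matrix (C × (N × (Q × J))) (C × (N × (Q × J))) ℂ →ₗ[ℂ]
          Matrix (C × (N × Q)) (C × (N × Q)) ℂ, IsQChannel Mm →
        1 - fidelity (kiIdeal p pc wc rq) (matExt Mm (kiSourceJ p pc wc rq jv)) ≤ D →
        (1 / 2) * mutualInfo (matExt Nm (pureMat (kiOmegaVec p pc wc rq jv))) ≤
          (1 / 2) * mutualInfo (matExt Mm (pureMat (kiOmegaVec p pc wc rq jv)))) :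
    1 - fidelity (kiIdeal p pc wc rq)
        (matExt (Nm ∘ₗ pinch C (N × (Q × J))) (kiSourceJ p pc wc rq jv)) ≤ D ∧
    (1 / 2) * mutualInfo
        (matExt (Nm ∘ₗ pinch C (N × (Q × J))) (pureMat (kiOmegaVec p pc wc rq jv))) =
      (1 / 2) * mutualInfo (matExt Nm (pureMat (kiOmegaVec p pc wc rq jv))) := by
  classical
  set ψ := kiOmegaVec p pc wc rq jv with hψdef
  set Ω := pureMat ψ with hΩdef
  have hpinchCP : ∀ (n : Type) [Fintype n],
      ∀ M : Matrix ((C × (N × (Q × J))) × n) ((C × (N × (Q × J))) × n) ℂ,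
      M.PosSemidef → (matExt (pinch C (N × (Q × J))) M).PosSemidef := by
    intro n _ M hM
    haveI := Classical.decEq ((C × (N × (Q × J))) × n)
    rw [matExt_pinch_eq_cpin]
    exact cpin_posSemidef _ hM
  have hQC : IsQChannel (Nm ∘ₗ pinch C (N × (Q × J))) := by
    constructor
    · intro n inst M hM
      rw [matExt_comp]
      exact hN.1 n _ (hpinchCP n M hM)
    · intro M
      have h := hN.2 (pinch C (N × (Q × J)) M)
      simp only [LinearMap.comp_apply]
      rw [h, pinch_trace]
  have hsrc : matExt (pinch C (N × (Q × J))) (kiSourceJ p pc wc rq jv)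
      = kiSourceJ p pc wc rq jv := by
    rw [matExt_pinch_eq_cpin]
    ext u v
    rw [cpin_apply]
    by_cases h : u.1.1 = v.1.1
    · rw [if_pos h]
    · rw [if_neg h]
      symm
      simp only [kiSourceJ, Matrix.of_apply]
      exact if_neg (fun hc => h hc.1.symm)
  have hfeas' : 1 - fidelity (kiIdeal p pc wc rq)
      (matExt (Nm ∘ₗ pinch C (N × (Q × J))) (kiSourceJ p pc wc rq jv)) ≤ D := by
    rw [matExt_comp, hsrc]
    exact hfeas
  set σ := matExt Nm Ω with hσdef
  have hσpsd : σ.PosSemidef := hN.1 _ Ω (pureMat_posSemidef ψ)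
  have hψsupp : ∀ u, ψ u ≠ 0 → u.2.1 = u.1.1 := by
    intro u hu
    by_contra hne
    apply hu
    rw [hψdef]
    simp only [kiOmegaVec]
    exact if_neg (fun hc => hne hc.1)
  have hΩc : cpin (fun pp : (C × (N × (Q × J))) × (C × (RN × (RQ × (X × X)))) => pp.1.1) Ω
           = cpin (fun pp : (C × (N × (Q × J))) × (C × (RN × (RQ × (X × X)))) => pp.2.1) Ω := by
    ext u v
    rw [cpin_apply, cpin_apply]
    by_cases hu : ψ u = 0
    · have hz : Ω u v = 0 := by
        show ψ u * (starRingEnd ℂ) (ψ v) = 0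
        rw [hu, zero_mul]
      rw [hz]
      simp
    by_cases hv : ψ v = 0
    · have hz : Ω u v = 0 := by
        show ψ u * (starRingEnd ℂ) (ψ v) = 0
        rw [hv]
        simp
      rw [hz]
      simp
    have h1 := hψsupp u hu
    have h2 := hψsupp v hv
    rw [h1, h2]
  have hkey : matExt (Nm ∘ₗ pinch C (N × (Q × J))) Ω
      = cpin (fun pp : (C × (N × Q)) × (C × (RN × (RQ × (X × X)))) => pp.2.1) σ := by
    rw [matExt_comp, matExt_pinch_eq_cpin, hΩc]
    exact matExt_cpin_ref Nm (fun rr : C × (RN × (RQ × (X × X))) => rr.1) Ω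
  set τ := cpin (fun pp : (C × (N × Q)) × (C × (RN × (RQ × (X × X)))) => pp.2.1) σ with hτdef
  have hτpsd : τ.PosSemidef := cpin_posSemidef _ hσpsd
  have hR : ptraceRight τ = ptraceRight σ := by
    ext a a'
    show (∑ r, τ (a, r) (a', r)) = ∑ r, σ (a, r) (a', r)
    refine Finset.sum_congr rfl fun r _ => ?_
    rw [hτdef, cpin_apply]
    exact if_pos rfl
  have hLσΩ : ptraceLeft σ = ptraceLeft Ω := ptraceLeft_matExt Nm hN.2 Ω
  have hLvanish : ∀ r r', r.1 ≠ r'.1 → ptraceLeft Ω r r' = 0 := by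
    intro r r' hne
    show (∑ a, Ω (a, r) (a, r')) = 0
    apply Finset.sum_eq_zero
    intro a _
    show ψ (a, r) * (starRingEnd ℂ) (ψ (a, r')) = 0
    by_cases h1 : ψ (a, r) = 0
    · rw [h1, zero_mul]
    · by_cases h2 : ψ (a, r') = 0
      · rw [h2]
        simp
      · exact absurd ((hψsupp _ h1).trans (hψsupp _ h2).symm) hne
  have hL : ptraceLeft τ = ptraceLeft σ := by
    ext r r'
    show (∑ a, τ (a, r) (a, r')) = ptraceLeft σ r r'
    by_cases h : r.1 = r'.1
    · show (∑ a, τ (a, r) (a, r')) = ∑ a, σ (a, r) (a, r')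
      refine Finset.sum_congr rfl fun a _ => ?_
      rw [hτdef, cpin_apply]
      exact if_pos h
    · have hz : ptraceLeft σ r r' = 0 := by
        rw [hLσΩ]
        exact hLvanish r r' h
      have hz2 : (∑ a, τ (a, r) (a, r')) = 0 := by
        apply Finset.sum_eq_zero
        intro a _
        rw [hτdef, cpin_apply]
        exact if_neg h
      rw [hz2, hz]
  have hent : entropy σ ≤ entropy τ := entropy_le_cpin _ hσpsd hτpsd
  have hMI : mutualInfo τ ≤ mutualInfo σ := by
    unfold mutualInfo
    rw [hR, hL]
    exact sub_le_sub_left hent _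
  have hopt' := hopt (Nm ∘ₗ pinch C (N × (Q × J))) hQC hfeas'
  rw [hkey] at hopt'
  refine ⟨hfeas', ?_⟩
  rw [hkey]
  linarith
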